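/- With the same graded ring as above, suppose 1 ≤ k < n and n − k is even. If α = b₄ u^{(n−k−2)/2} + b₂ u^{(n−k)/2} + b₀ u^{(n−k+2)/2} with b₀ ∈ H⁰(B), b₂ ∈ H²(B), b₄ ∈ H⁴(B) satisfies (x+u)^k α = 0, then b₀ = b₂ = b₄ = 0. -/

import Mathlib

open Polynomial

/-! Multiplication by the monic polynomial `(X + C x)^k` is injective on `R[X]`, and the product
`(X + C x)^k α` has degree `k + (n - k + 2)/2 < n + 1 = deg p`, so it vanishes in `R[X]/(p)` only if
it already vanishes in `R[X]`. Hence `α = 0` as a polynomial, and its coefficients `b₄, b₂, b₀` are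
zero. -/

namespace Polynomial

variable {R : Type*} [CommRing R]

theorem monic_X_pow_succ_sub_C_mul_sub_C_mul (n : ℕ) (a b : R) :
    (X ^ (n + 1) - C a * X ^ n - C b * X ^ (n - 1)).Monic := by
  rw [sub_sub]
  apply monic_X_pow_sub
  have hlow : (C a * X ^ n + C b * X ^ (n - 1)).degree ≤ (n : WithBot ℕ) := by
    compute_degree!
  exact hlow.trans_lt (by exact_mod_cast n.lt_succ_self)

theorem natDegree_X_pow_succ_sub_C_mul_sub_C_mul [Nontrivial R] (n : ℕ) (a b : R) :
    (X ^ (n + 1) - C a * X ^ n - C b * X ^ (n - 1)).natDegree = n + 1 := by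
  rw [sub_sub, natDegree_sub_eq_left_of_natDegree_lt] <;> rw [natDegree_X_pow]
  compute_degree
  omega

theorem C_mul_X_pow_add_C_mul_X_pow_succ_add_C_mul_X_pow_add_two_eq_zero_iff (j : ℕ) (a b c : R) :
    C a * X ^ j + C b * X ^ (j + 1) + C c * X ^ (j + 2) = 0 ↔ a = 0 ∧ b = 0 ∧ c = 0 := by
  refine ⟨fun h ↦ ⟨?_, ?_, ?_⟩, by rintro ⟨rfl, rfl, rfl⟩; simp⟩
  · simpa [coeff_X_pow] using congrArg (coeff · j) h
  · simpa [coeff_X_pow] using congrArg (coeff · (j + 1)) h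
  · simpa [coeff_X_pow] using congrArg (coeff · (j + 2)) h

end Polynomial

theorem AdjoinRoot.eq_zero_of_mk_eq_zero_of_natDegree_lt {R : Type*} [CommRing R] {p q : R[X]}
    (hp : p.Monic) (hq : q.natDegree < p.natDegree) (h : AdjoinRoot.mk p q = 0) : q = 0 := by
  by_contra hq0
  exact hp.not_dvd_of_natDegree_lt hq0 hq (AdjoinRoot.mk_eq_zero.mp h)

theorem stmt_12_general {R : Type*} [CommRing R] (n k : ℕ) (hk2 : k < n)
    (heven : Even (n - k))
    (x β₂ β₄ b₀ b₂ b₄ : R)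
    (p : R[X]) (hp : p = X ^ (n + 1) - C β₂ * X ^ n - C β₄ * X ^ (n - 1))
    (h : ((AdjoinRoot.of p x + AdjoinRoot.root p) ^ k)
        * (AdjoinRoot.of p b₄ * AdjoinRoot.root p ^ ((n - k - 2) / 2)
            + AdjoinRoot.of p b₂ * AdjoinRoot.root p ^ ((n - k) / 2)
            + AdjoinRoot.of p b₀ * AdjoinRoot.root p ^ ((n - k + 2) / 2)) = 0) :
    b₀ = 0 ∧ b₂ = 0 ∧ b₄ = 0 := by
  rcases subsingleton_or_nontrivial R with hR | hR
  · exact ⟨Subsingleton.elim _ _, Subsingleton.elim _ _, Subsingleton.elim _ _⟩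
  obtain ⟨j, hj⟩ : ∃ j, n - k = 2 * j + 2 := by
    obtain ⟨m, hm⟩ := heven
    exact ⟨m - 1, by omega⟩
  rw [show (n - k - 2) / 2 = j by omega, show (n - k) / 2 = j + 1 by omega,
    show (n - k + 2) / 2 = j + 2 by omega] at h
  set α : R[X] := C b₄ * X ^ j + C b₂ * X ^ (j + 1) + C b₀ * X ^ (j + 2) with hα
  have hmk : AdjoinRoot.mk p ((X + C x) ^ k * α) = 0 := by
    simpa [α, add_comm] using h
  have hdeg : ((X + C x) ^ k * α).natDegree < p.natDegree := by
    rw [hp, natDegree_X_pow_succ_sub_C_mul_sub_C_mul]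
    have : ((X + C x) ^ k * α).natDegree ≤ k + (j + 2) := by
      rw [hα]; compute_degree
    omega
  have hα0 : α = 0 := ((monic_X_add_C x).pow k).mul_right_eq_zero_iff.mp
    (AdjoinRoot.eq_zero_of_mk_eq_zero_of_natDegree_lt
      (hp ▸ monic_X_pow_succ_sub_C_mul_sub_C_mul n β₂ β₄) hdeg hmk)
  obtain ⟨h₄, h₂, h₀⟩ :=
    (C_mul_X_pow_add_C_mul_X_pow_succ_add_C_mul_X_pow_add_two_eq_zero_iff j b₄ b₂ b₀).mp hα0
  exact ⟨h₀, h₂, h₄⟩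

/-- Same graded ring `H*(M) = R[u]/(u^{n+1} - β₂ uⁿ - β₄ u^{n-1})` as before.
For `1 ≤ k < n` with `n - k` even, if
`α = b₄ u^{(n-k-2)/2} + b₂ u^{(n-k)/2} + b₀ u^{(n-k+2)/2}` (with `x³ = 0`,
`b₂ x² = 0`, `b₄ x = 0`, products of base classes of total degree `> 4` vanishing)
satisfies `(x+u)^k α = 0`, then `b₀ = b₂ = b₄ = 0`. -/
theorem stmt_12 {R : Type*} [CommRing R] (n k : ℕ) (hk1 : 1 ≤ k) (hk2 : k < n)
    (heven : Even (n - k))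
    (x β₂ β₄ b₀ b₂ b₄ : R)
    (hx : x ^ 3 = 0) (hb2 : b₂ * x ^ 2 = 0) (hb4 : b₄ * x = 0)
    (p : R[X]) (hp : p = X ^ (n + 1) - C β₂ * X ^ n - C β₄ * X ^ (n - 1))
    (h : ((AdjoinRoot.of p x + AdjoinRoot.root p) ^ k)
        * (AdjoinRoot.of p b₄ * AdjoinRoot.root p ^ ((n - k - 2) / 2)
            + AdjoinRoot.of p b₂ * AdjoinRoot.root p ^ ((n - k) / 2)
            + AdjoinRoot.of p b₀ * AdjoinRoot.root p ^ ((n - k + 2) / 2)) = 0) :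
    b₀ = 0 ∧ b₂ = 0 ∧ b₄ = 0 :=
  stmt_12_general n k hk2 heven x β₂ β₄ b₀ b₂ b₄ p hp h
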